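/- arXiv:2308.07896 — 2 statements merged into one kernel-verified Lean document; each statement's English description precedes it below -/
import Mathlib

section
/- (Rearrangement of the recursion remainders.) Fix D ∈ ℕ, D ≥ 1, and n ∈ ℕ with n ≥ 3. Let Γ : [a, b] → ℝ^D be n-times continuously differentiable on the compact interval [a, b] ⊆ ℝ. For τ_s, τ_t ∈ [a, b] with h_s := τ_t − τ_s, define R_i := (−1)^{i+1} Σ_{k=i+1}^{n} (h_s^{k−i−1}/k!) Γ^{(k−i)}(τ_t) for i = 1, …, n−1. Then there exist C > 0 and δ > 0 such that whenever 0 < |h_s| ≤ δ: ‖Σ_{i=1}^{n−1} R_i − φ₂(n) Γ'(τ_t) − φ₃(n) h_s Γ''(τ_t)‖ ≤ C h_s², where φ₂(n) := Σ_{k=2}^{n} (−1)^{k}/k! and φ₃(n) := Σ_{k=3}^{n} (−1)^{k+1}/k!. -/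
noncomputable def phi2 (n : ℕ) : ℝ :=
  ∑ k ∈ Finset.Icc 2 n, (-1 : ℝ) ^ k / Nat.factorial k

noncomputable def phi3 (n : ℕ) : ℝ :=
  ∑ k ∈ Finset.Icc 3 n, (-1 : ℝ) ^ (k + 1) / Nat.factorial k

open Finset

lemma sum_swap_key {E : Type*} [AddCommGroup E] [Module ℝ E]
    (n : ℕ) (h : ℝ) (g : ℕ → E) :
    ∑ i ∈ Finset.Icc 1 (n-1), ((-1:ℝ)^(i+1)) •
      ∑ k ∈ Finset.Icc (i+1) n, (h^(k-i-1) / (Nat.factorial k : ℝ)) • g (k-i)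
    = ∑ j ∈ Finset.Icc 1 (n-1),
        ((∑ i ∈ Finset.Icc 1 (n-j), (-1:ℝ)^(i+1) / (Nat.factorial (i+j) : ℝ)) * h^(j-1)) • g j := by
  simp_rw [Finset.smul_sum, smul_smul, Finset.sum_mul, Finset.sum_smul]
  rw [Finset.sum_sigma', Finset.sum_sigma']
  refine Finset.sum_nbij' (fun p => ⟨p.2 - p.1, p.1⟩) (fun q => ⟨q.2, q.2 + q.1⟩) ?_ ?_ ?_ ?_ ?_
  · rintro ⟨i, k⟩ hp
    simp only [Finset.mem_sigma, Finset.mem_Icc] at hp ⊢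
    omega
  · rintro ⟨j, i⟩ hq
    simp only [Finset.mem_sigma, Finset.mem_Icc] at hq ⊢
    omega
  · rintro ⟨i, k⟩ hp
    simp only [Finset.mem_sigma, Finset.mem_Icc] at hp
    have h1 : i + (k - i) = k := by omega
    simp [h1]
  · rintro ⟨j, i⟩ hq
    simp only [Finset.mem_sigma, Finset.mem_Icc] at hq
    have h1 : i + j - i = j := by omega
    simp [h1]
  · rintro ⟨i, k⟩ hp
    simp only [Finset.mem_sigma, Finset.mem_Icc] at hp
    have h1 : i + (k - i) = k := by omega
    simp only []
    rw [h1]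
    ring_nf

lemma c1_eq (n : ℕ) (hn : 3 ≤ n) :
    ∑ i ∈ Finset.Icc 1 (n-1), (-1:ℝ)^(i+1) / (Nat.factorial (i+1) : ℝ) = phi2 n := by
  rw [phi2, show Finset.Icc 2 n = Finset.map (addRightEmbedding 1) (Finset.Icc 1 (n-1)) by
    rw [Finset.map_add_right_Icc]; congr 1; omega]
  rw [Finset.sum_map]
  rfl

lemma c2_eq (n : ℕ) (hn : 3 ≤ n) :
    ∑ i ∈ Finset.Icc 1 (n-2), (-1:ℝ)^(i+1) / (Nat.factorial (i+2) : ℝ) = phi3 n := by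
  rw [phi3, show Finset.Icc 3 n = Finset.map (addRightEmbedding 2) (Finset.Icc 1 (n-2)) by
    rw [Finset.map_add_right_Icc]; congr 1; omega]
  rw [Finset.sum_map]
  apply Finset.sum_congr rfl
  intro i _
  simp only [addRightEmbedding_apply]
  rw [show i + 2 + 1 = (i+1) + 2 by ring, pow_add, pow_add]
  ring

/-- rearrangement of the recursion remainders: with
`R_i = (−1)^{i+1} Σ_{k=i+1}^n (h_s^{k−i−1}/k!) Γ^{(k−i)}(τ_t)`,
`Σ_{i=1}^{n−1} R_i = φ₂(n) Γ'(τ_t) + φ₃(n) h_s Γ''(τ_t) + O(h_s²)`. -/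
theorem stmt8
    (D : ℕ) (hD : 1 ≤ D) (n : ℕ) (hn : 3 ≤ n) (a b : ℝ) (hab : a ≤ b)
    (Γ : ℝ → EuclideanSpace ℝ (Fin D))
    (hΓ : ContDiffOn ℝ (n : ℕ∞) Γ (Set.Icc a b)) :
    ∃ C > 0, ∃ δ > 0, ∀ τs ∈ Set.Icc a b, ∀ τt ∈ Set.Icc a b,
      0 < |τt - τs| → |τt - τs| ≤ δ →
      ‖(∑ i ∈ Finset.Icc 1 (n - 1),
            ((-1 : ℝ) ^ (i + 1)) •
              ∑ k ∈ Finset.Icc (i + 1) n,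
                ((τt - τs) ^ (k - i - 1) / (Nat.factorial k)) •
                  iteratedDerivWithin (k - i) Γ (Set.Icc a b) τt) -
          phi2 n • iteratedDerivWithin 1 Γ (Set.Icc a b) τt -
          (phi3 n * (τt - τs)) • iteratedDerivWithin 2 Γ (Set.Icc a b) τt‖ ≤
        C * (τt - τs) ^ 2 := by
  rcases eq_or_lt_of_le hab with heq | hlt
  · -- degenerate case a = b : hypotheses are contradictory
    refine ⟨1, one_pos, 1, one_pos, ?_⟩
    intro τs hτs τt hτt hpos _
    exfalso
    subst heq
    have h1 : τs = a := le_antisymm hτs.2 hτs.1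
    have h2 : τt = a := le_antisymm hτt.2 hτt.1
    rw [h1, h2] at hpos
    simp at hpos
  · have hud : UniqueDiffOn ℝ (Set.Icc a b) := uniqueDiffOn_Icc hlt
    -- uniform bound on the derivatives
    have hcont : ContinuousOn
        (fun x => ∑ j ∈ Finset.Icc 3 (n-1), ‖iteratedDerivWithin j Γ (Set.Icc a b) x‖)
        (Set.Icc a b) := by
      apply continuousOn_finset_sum
      intro j hj
      simp only [Finset.mem_Icc] at hj
      exact (hΓ.continuousOn_iteratedDerivWithin
        (by exact_mod_cast (by omega : j ≤ n)) hud).norm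
    obtain ⟨B, hB⟩ := (isCompact_Icc (a := a) (b := b)).exists_bound_of_continuousOn hcont
    have hB0 : 0 ≤ B := le_trans (norm_nonneg _) (hB a ⟨le_refl a, hab⟩)
    have hgB : ∀ j ∈ Finset.Icc 3 (n-1), ∀ x ∈ Set.Icc a b,
        ‖iteratedDerivWithin j Γ (Set.Icc a b) x‖ ≤ B := by
      intro j hj x hx
      refine le_trans (Finset.single_le_sum (f := fun j =>
        ‖iteratedDerivWithin j Γ (Set.Icc a b) x‖) (fun _ _ => norm_nonneg _) hj) ?_
      exact le_trans (le_abs_self _) (hB x hx)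
    set c : ℕ → ℝ := fun j => ∑ i ∈ Finset.Icc 1 (n-j),
      (-1:ℝ)^(i+1) / (Nat.factorial (i+j) : ℝ) with hc
    refine ⟨(∑ j ∈ Finset.Icc 3 (n-1), |c j| * B) + 1, by positivity, 1, one_pos, ?_⟩
    intro τs hτs τt hτt hpos hδ
    set h : ℝ := τt - τs with hh
    set g : ℕ → EuclideanSpace ℝ (Fin D) :=
      fun j => iteratedDerivWithin j Γ (Set.Icc a b) τt with hg
    rw [sum_swap_key n h g]
    have hset : Finset.Icc 1 (n-1) = insert 1 (insert 2 (Finset.Icc 3 (n-1))) := by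
      ext x; simp only [Finset.mem_Icc, Finset.mem_insert]; omega
    rw [hset, Finset.sum_insert (by simp only [Finset.mem_insert, Finset.mem_Icc]; omega),
      Finset.sum_insert (by simp only [Finset.mem_Icc]; omega)]
    have e1 : ((∑ i ∈ Finset.Icc 1 (n-1), (-1:ℝ)^(i+1) / (Nat.factorial (i+1) : ℝ)) * h^(1-1)) • g 1
        = phi2 n • g 1 := by
      rw [c1_eq n hn]; norm_num
    have e2 : ((∑ i ∈ Finset.Icc 1 (n-2), (-1:ℝ)^(i+1) / (Nat.factorial (i+2) : ℝ)) * h^(2-1)) • g 2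
        = (phi3 n * h) • g 2 := by
      rw [c2_eq n hn]; norm_num
    rw [e1, e2]
    have ecancel : phi2 n • g 1 + ((phi3 n * h) • g 2 +
          ∑ j ∈ Finset.Icc 3 (n-1), (c j * h^(j-1)) • g j) -
        phi2 n • g 1 - (phi3 n * h) • g 2
        = ∑ j ∈ Finset.Icc 3 (n-1), (c j * h^(j-1)) • g j := by abel
    rw [ecancel]
    calc ‖∑ j ∈ Finset.Icc 3 (n-1), (c j * h^(j-1)) • g j‖
        ≤ ∑ j ∈ Finset.Icc 3 (n-1), ‖(c j * h^(j-1)) • g j‖ := norm_sum_le _ _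
      _ ≤ ∑ j ∈ Finset.Icc 3 (n-1), (|c j| * B) * h^2 := by
          apply Finset.sum_le_sum
          intro j hj
          have hjm : j ∈ Finset.Icc 3 (n-1) := hj
          simp only [Finset.mem_Icc] at hj
          rw [norm_smul, Real.norm_eq_abs, abs_mul, abs_pow]
          have h1 : |h|^(j-1) ≤ h^2 := by
            rw [← sq_abs]
            exact pow_le_pow_of_le_one (abs_nonneg h) hδ (by omega)
          have h2 : ‖g j‖ ≤ B := hgB j hjm τt hτt
          calc |c j| * |h|^(j-1) * ‖g j‖
              ≤ |c j| * (h^2 * B) := by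
                rw [mul_assoc]
                exact mul_le_mul_of_nonneg_left
                  (mul_le_mul h1 h2 (norm_nonneg _) (sq_nonneg h)) (abs_nonneg _)
            _ = (|c j| * B) * h^2 := by ring
      _ = (∑ j ∈ Finset.Icc 3 (n-1), |c j| * B) * h^2 := by rw [Finset.sum_mul]
      _ ≤ ((∑ j ∈ Finset.Icc 3 (n-1), |c j| * B) + 1) * h^2 := by
          apply mul_le_mul_of_nonneg_right _ (sq_nonneg h)
          linarith
end

section
/- (Recursive difference identity underlying Corollary 1.) Fix D ∈ ℕ, D ≥ 1, and n ∈ ℕ with n ≥ 3. Let Γ : [a, b] → ℝ^D be n-times continuously differentiable on the compact interval [a, b] ⊆ ℝ. For τ_s, τ_t ∈ [a, b] with h_s := τ_t − τ_s, define R_i := (−1)^{i+1} Σ_{k=i+1}^{n} (h_s^{k−i−1}/k!) Γ^{(k−i)}(τ_t) for i = 1, …, n−1, and φ₁(n) := Σ_{k=1}^{n} (−1)^{k−1}/k!. Then there exist C > 0 and δ > 0 such that whenever 0 < |h_s| ≤ δ: ‖(Γ(τ_t) − Γ(τ_s))/h_s − φ₁(n) Γ'(τ_s) − Σ_{i=1}^{n−1}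 R_i‖ ≤ C h_s². -/
open Set Nat

section Aux

variable {E : Type*} [NormedAddCommGroup E] [NormedSpace ℝ E]

lemma taylor_bound_two_sided {f : ℝ → E} {a b C : ℝ} {n : ℕ} (hab : a < b)
    (hf : ContDiffOn ℝ (n + 1 : ℕ) f (Set.Icc a b))
    (hC : ∀ y ∈ Set.Icc a b, ‖iteratedDerivWithin (n + 1) f (Set.Icc a b) y‖ ≤ C)
    {x₀ x : ℝ} (hx₀ : x₀ ∈ Set.Icc a b) (hx : x ∈ Set.Icc a b) :
    ‖f x - taylorWithinEval f n (Set.Icc a b) x₀ x‖ ≤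
      (n ! : ℝ)⁻¹ * |x - x₀| ^ n * C * |x - x₀| := by
  have hs : UniqueDiffOn ℝ (Set.Icc a b) := uniqueDiffOn_Icc hab
  have hf' : DifferentiableOn ℝ (iteratedDerivWithin n f (Set.Icc a b)) (Set.Icc a b) :=
    hf.differentiableOn_iteratedDerivWithin (by exact_mod_cast n.lt_succ_self) hs
  have hts : Set.Icc (min x₀ x) (max x₀ x) ⊆ Set.Icc a b :=
    Set.Icc_subset_Icc (le_min hx₀.1 hx.1) (max_le hx₀.2 hx.2)
  have hA : ∀ u ∈ Set.Icc (min x₀ x) (max x₀ x),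
      HasDerivWithinAt (fun y => taylorWithinEval f n (Set.Icc a b) y x)
        (((n ! : ℝ)⁻¹ * (x - u) ^ n) • iteratedDerivWithin (n + 1) f (Set.Icc a b) u)
        (Set.Icc (min x₀ x) (max x₀ x)) u := fun u hu =>
    (hasDerivWithinAt_taylorWithinEval_at_Icc x hab (hts hu) hf.of_succ hf').mono hts
  have hbound : ∀ u ∈ Set.Icc (min x₀ x) (max x₀ x),
      ‖((n ! : ℝ)⁻¹ * (x - u) ^ n) • iteratedDerivWithin (n + 1) f (Set.Icc a b) u‖ ≤
        (n ! : ℝ)⁻¹ * |x - x₀| ^ n * C := by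
    intro u hu
    have h1 : |x - u| ≤ |x - x₀| := by
      have h2 : max x₀ x - min x₀ x = |x - x₀| := max_sub_min_eq_abs _ _
      have h4 : x ≤ max x₀ x := le_max_right _ _
      have h5 : min x₀ x ≤ x := min_le_right _ _
      rw [abs_sub_le_iff]
      constructor <;> linarith [hu.1, hu.2]
    have hCn : ‖iteratedDerivWithin (n + 1) f (Set.Icc a b) u‖ ≤ C := hC u (hts hu)
    have h0C : (0 : ℝ) ≤ C := le_trans (norm_nonneg _) hCn
    rw [norm_smul, Real.norm_eq_abs, abs_mul, abs_pow, abs_inv, Nat.abs_cast]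
    gcongr
  have hmv := (convex_Icc (min x₀ x) (max x₀ x)).norm_image_sub_le_of_norm_hasDerivWithin_le
    hA hbound (Set.mem_Icc.mpr ⟨min_le_left _ _, le_max_left _ _⟩)
    (Set.mem_Icc.mpr ⟨min_le_right _ _, le_max_right _ _⟩)
  simp only [taylorWithinEval_self] at hmv
  calc ‖f x - taylorWithinEval f n (Set.Icc a b) x₀ x‖ ≤
      (n ! : ℝ)⁻¹ * |x - x₀| ^ n * C * ‖x - x₀‖ := hmv
    _ = (n ! : ℝ)⁻¹ * |x - x₀| ^ n * C * |x - x₀| := by rw [Real.norm_eq_abs]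

lemma inner_reindex (n i : ℕ) (h : ℝ) (G : ℕ → E) :
    ∑ k ∈ Finset.Icc (i + 1) n, ((h ^ (k - i - 1) / (Nat.factorial k : ℝ)) • G (k - i)) =
    ∑ j ∈ Finset.Icc 1 (n - i), ((h ^ (j - 1) / (Nat.factorial (i + j) : ℝ)) • G j) := by
  refine Finset.sum_nbij' (fun k => k - i) (fun j => i + j) ?_ ?_ ?_ ?_ ?_
  · intro k hk; simp only [Finset.mem_Icc] at *; omega
  · intro j hj; simp only [Finset.mem_Icc] at *; omega
  · intro k hk; simp only [Finset.mem_Icc] at *; omega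
  · intro j hj; simp only [Finset.mem_Icc] at *; omega
  · intro k hk; simp only [Finset.mem_Icc] at hk
    have h1 : i + (k - i) = k := by omega
    rw [h1]

lemma sum_exchange (n : ℕ) (h : ℝ) (G : ℕ → E) :
    (∑ i ∈ Finset.Icc 1 (n - 1), ((-1 : ℝ) ^ (i + 1)) •
        ∑ k ∈ Finset.Icc (i + 1) n, ((h ^ (k - i - 1) / (Nat.factorial k : ℝ)) • G (k - i))) =
    ∑ j ∈ Finset.Icc 1 (n - 1),
        ((∑ m ∈ Finset.Icc (j + 1) n, ((-1 : ℝ) ^ (m - j + 1) / (Nat.factorial m : ℝ)))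
          * h ^ (j - 1)) • G j := by
  have L1 : ∀ i ∈ Finset.Icc 1 (n - 1),
      (((-1 : ℝ) ^ (i + 1)) •
        ∑ k ∈ Finset.Icc (i + 1) n, ((h ^ (k - i - 1) / (Nat.factorial k : ℝ)) • G (k - i))) =
      ∑ j ∈ Finset.Icc 1 (n - i),
        (((-1 : ℝ) ^ (i + 1) * (h ^ (j - 1) / (Nat.factorial (i + j) : ℝ))) • G j) := by
    intro i hi
    rw [inner_reindex n i h G, Finset.smul_sum]
    exact Finset.sum_congr rfl fun j _ => by rw [smul_smul]
  rw [Finset.sum_congr rfl L1]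
  rw [Finset.sum_comm' (t' := Finset.Icc 1 (n - 1)) (s' := fun j => Finset.Icc 1 (n - j))
    (by intro i j; simp only [Finset.mem_Icc]; omega)]
  refine Finset.sum_congr rfl fun j hj => ?_
  simp only [Finset.mem_Icc] at hj
  rw [Finset.sum_mul, Finset.sum_smul]
  refine Finset.sum_nbij' (fun i => i + j) (fun m => m - j) ?_ ?_ ?_ ?_ ?_
  · intro i hi; simp only [Finset.mem_Icc] at *; omega
  · intro m hm; simp only [Finset.mem_Icc] at *; omega
  · intro i hi; simp only [Finset.mem_Icc] at *; omega
  · intro m hm; simp only [Finset.mem_Icc] at *; omega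
  · intro i hi; simp only [Finset.mem_Icc] at hi
    have h1 : i + j - j = i := by omega
    rw [h1]
    congr 1
    ring

end Aux

/-- `φ₁(n) = Σ_{k=1}^n (−1)^{k−1}/k!`. -/
noncomputable def phi1 (n : ℕ) : ℝ :=
  ∑ k ∈ Finset.Icc 1 n, (-1 : ℝ) ^ (k - 1) / Nat.factorial k

lemma natCast_le_withTop {j n : ℕ} (h : j ≤ n) :
    (((j:ℕ):ℕ∞) : WithTop ℕ∞) ≤ (((n:ℕ):ℕ∞) : WithTop ℕ∞) :=
  WithTop.coe_le_coe.mpr (by exact_mod_cast h)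

set_option maxHeartbeats 1000000 in
/-- recursive difference identity underlying Corollary 1: with
`R_i = (−1)^{i+1} Σ_{k=i+1}^n (h_s^{k−i−1}/k!) Γ^{(k−i)}(τ_t)`,
`(Γ(τ_t) − Γ(τ_s))/h_s = φ₁(n) Γ'(τ_s) + Σ_{i=1}^{n−1} R_i + O(h_s²)`. -/
theorem stmt9
    (D : ℕ) (hD : 1 ≤ D) (n : ℕ) (hn : 3 ≤ n) (a b : ℝ) (hab : a ≤ b)
    (Γ : ℝ → EuclideanSpace ℝ (Fin D))
    (hΓ : ContDiffOn ℝ (n : ℕ∞) Γ (Set.Icc a b)) :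
    ∃ C > 0, ∃ δ > 0, ∀ τs ∈ Set.Icc a b, ∀ τt ∈ Set.Icc a b,
      0 < |τt - τs| → |τt - τs| ≤ δ →
      ‖(τt - τs)⁻¹ • (Γ τt - Γ τs) -
          phi1 n • iteratedDerivWithin 1 Γ (Set.Icc a b) τs -
          ∑ i ∈ Finset.Icc 1 (n - 1),
            ((-1 : ℝ) ^ (i + 1)) •
              ∑ k ∈ Finset.Icc (i + 1) n,
                ((τt - τs) ^ (k - i - 1) / (Nat.factorial k)) •
                  iteratedDerivWithin (k - i) Γ (Set.Icc a b) τt‖ ≤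
        C * (τt - τs) ^ 2 := by
  rcases eq_or_lt_of_le hab with rfl | hlt
  · refine ⟨1, one_pos, 1, one_pos, fun τs hs τt ht hpos _ => ?_⟩
    have h1 : τs = a := le_antisymm hs.2 hs.1
    have h2 : τt = a := le_antisymm ht.2 ht.1
    rw [h1, h2] at hpos
    simp at hpos
  have hud : UniqueDiffOn ℝ (Set.Icc a b) := uniqueDiffOn_Icc hlt
  have hΓ3 : ContDiffOn ℝ ((3 : ℕ) : ℕ∞) Γ (Set.Icc a b) := hΓ.of_le (natCast_le_withTop hn)
  have hg2 : ContDiffOn ℝ ((2 : ℕ) : ℕ∞) (derivWithin Γ (Set.Icc a b)) (Set.Icc a b) :=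
    hΓ.derivWithin hud (by
      rw [show ((((2:ℕ):ℕ∞)) : WithTop ℕ∞) + 1 = ((((3:ℕ):ℕ∞)) : WithTop ℕ∞) from rfl]
      exact natCast_le_withTop hn)
  have hcont3 : ContinuousOn (iteratedDerivWithin 3 Γ (Set.Icc a b)) (Set.Icc a b) :=
    hΓ.continuousOn_iteratedDerivWithin (by exact natCast_le_withTop hn) hud
  obtain ⟨M3, hM3⟩ := isCompact_Icc.exists_bound_of_continuousOn hcont3
  have hM30 : 0 ≤ M3 := le_trans (norm_nonneg _) (hM3 a (Set.left_mem_Icc.mpr hab))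
  -- bounds for all needed iterated derivatives
  have hBex : ∀ j : ℕ, ∃ Bj : ℝ, 0 ≤ Bj ∧ (j ≤ n →
      ∀ y ∈ Set.Icc a b, ‖iteratedDerivWithin j Γ (Set.Icc a b) y‖ ≤ Bj) := by
    intro j
    by_cases hj : j ≤ n
    · obtain ⟨Bj, hBj⟩ := isCompact_Icc.exists_bound_of_continuousOn
        (hΓ.continuousOn_iteratedDerivWithin (by exact natCast_le_withTop hj) hud)
      exact ⟨max Bj 0, le_max_right _ _, fun _ y hy => le_trans (hBj y hy) (le_max_left _ _)⟩
    · exact ⟨0, le_rfl, fun h => absurd h hj⟩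
  choose B hB0 hB using hBex
  refine ⟨M3 / 2 + |phi1 n| * M3 +
      (∑ j ∈ Finset.Icc 3 (n - 1),
        |∑ m ∈ Finset.Icc (j + 1) n, ((-1 : ℝ) ^ (m - j + 1) / (Nat.factorial m : ℝ))| * B j)
      + 1, ?_, 1, one_pos, ?_⟩
  · have hsum0 : (0:ℝ) ≤ ∑ j ∈ Finset.Icc 3 (n - 1),
        |∑ m ∈ Finset.Icc (j + 1) n, ((-1 : ℝ) ^ (m - j + 1) / (Nat.factorial m : ℝ))| * B j :=
      Finset.sum_nonneg fun j _ => mul_nonneg (abs_nonneg _) (hB0 j)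
    have h1 : (0:ℝ) ≤ |phi1 n| * M3 := mul_nonneg (abs_nonneg _) hM30
    linarith
  intro τs hτs τt hτt hpos hle
  have hne0 : τt - τs ≠ 0 := by
    intro h0
    rw [h0] at hpos
    simp at hpos
  have habs : |τs - τt| = |τt - τs| := abs_sub_comm _ _
  -- the g-related derivative identities
  have hg1t : iteratedDerivWithin 1 (derivWithin Γ (Set.Icc a b)) (Set.Icc a b) τt =
      iteratedDerivWithin 2 Γ (Set.Icc a b) τt := (congrFun iteratedDerivWithin_succ' τt).symm
  have hM3' : ∀ y ∈ Set.Icc a b,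
      ‖iteratedDerivWithin (2 + 1) Γ (Set.Icc a b) y‖ ≤ M3 := hM3
  have hM3g : ∀ y ∈ Set.Icc a b,
      ‖iteratedDerivWithin (1 + 1) (derivWithin Γ (Set.Icc a b)) (Set.Icc a b) y‖ ≤ M3 := by
    intro y hy
    rw [show iteratedDerivWithin (1 + 1) (derivWithin Γ (Set.Icc a b)) (Set.Icc a b) y =
        iteratedDerivWithin 3 Γ (Set.Icc a b) y from (congrFun iteratedDerivWithin_succ' y).symm]
    exact hM3 y hy
  -- remainders
  set r₀ := Γ τs - taylorWithinEval Γ 2 (Set.Icc a b) τt τs with hr0def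
  set r₁ := derivWithin Γ (Set.Icc a b) τs -
    taylorWithinEval (derivWithin Γ (Set.Icc a b)) 1 (Set.Icc a b) τt τs with hr1def
  have hr0bnd : ‖r₀‖ ≤ ((Nat.factorial 2 : ℝ))⁻¹ * |τs - τt| ^ 2 * M3 * |τs - τt| := by
    rw [hr0def]
    exact taylor_bound_two_sided hlt hΓ3 hM3' hτt hτs
  have hr1bnd : ‖r₁‖ ≤ ((Nat.factorial 1 : ℝ))⁻¹ * |τs - τt| ^ 1 * M3 * |τs - τt| := by
    rw [hr1def]
    exact taylor_bound_two_sided hlt hg2 hM3g hτt hτs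
  have hr0' : ‖r₀‖ ≤ M3 / 2 * |τt - τs| ^ 3 := by
    refine le_trans hr0bnd (le_of_eq ?_)
    rw [habs, show ((Nat.factorial 2 : ℕ) : ℝ) = 2 from by norm_num [Nat.factorial]]
    ring
  have hr1' : ‖r₁‖ ≤ M3 * |τt - τs| ^ 2 := by
    refine le_trans hr1bnd (le_of_eq ?_)
    rw [habs, show ((Nat.factorial 1 : ℕ) : ℝ) = 1 from by norm_num [Nat.factorial]]
    ring
  -- Taylor polynomial expansions
  have htay0 : taylorWithinEval Γ 2 (Set.Icc a b) τt τs =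
      Γ τt + (τs - τt) • iteratedDerivWithin 1 Γ (Set.Icc a b) τt
        + ((2 : ℝ)⁻¹ * (τs - τt) ^ 2) • iteratedDerivWithin 2 Γ (Set.Icc a b) τt := by
    rw [taylor_within_apply, Finset.sum_range_succ, Finset.sum_range_succ, Finset.sum_range_one]
    simp only [iteratedDerivWithin_zero, pow_zero, pow_one, Nat.factorial_zero,
      Nat.factorial_one, Nat.cast_one, inv_one, one_mul, one_smul, mul_one]
    norm_num [Nat.factorial]
  have htay1 : taylorWithinEval (derivWithin Γ (Set.Icc a b)) 1 (Set.Icc a b) τt τs =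
      iteratedDerivWithin 1 Γ (Set.Icc a b) τt
        + (τs - τt) • iteratedDerivWithin 2 Γ (Set.Icc a b) τt := by
    rw [taylor_within_apply, Finset.sum_range_succ, Finset.sum_range_one]
    rw [hg1t]
    simp only [iteratedDerivWithin_zero, pow_zero, pow_one, Nat.factorial_zero,
      Nat.factorial_one, Nat.cast_one, inv_one, one_mul, one_smul, mul_one]
    rw [← iteratedDerivWithin_one]
  -- expansions as equations
  have e0 : Γ τs = Γ τt + (τs - τt) • iteratedDerivWithin 1 Γ (Set.Icc a b) τt
      + ((2 : ℝ)⁻¹ * (τs - τt) ^ 2) • iteratedDerivWithin 2 Γ (Set.Icc a b) τt + r₀ := by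
    rw [hr0def, htay0]; abel
  have e1 : derivWithin Γ (Set.Icc a b) τs = iteratedDerivWithin 1 Γ (Set.Icc a b) τt
      + (τs - τt) • iteratedDerivWithin 2 Γ (Set.Icc a b) τt + r₁ := by
    rw [hr1def, htay1]; abel
  -- coefficient identities
  have hins1 : Finset.Icc 1 n = insert 1 (Finset.Icc (1 + 1) n) := by
    ext m; simp only [Finset.mem_Icc, Finset.mem_insert]; omega
  have hins2 : Finset.Icc (1 + 1) n = insert 2 (Finset.Icc (2 + 1) n) := by
    ext m; simp only [Finset.mem_Icc, Finset.mem_insert]; omega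
  have hnotin1 : (1 : ℕ) ∉ Finset.Icc (1 + 1) n := by simp
  have hnotin2 : (2 : ℕ) ∉ Finset.Icc (2 + 1) n := by simp
  have hphi : phi1 n = 1 + ∑ m ∈ Finset.Icc (1 + 1) n, (-1 : ℝ) ^ (m - 1) / (Nat.factorial m : ℝ) := by
    rw [phi1, hins1, Finset.sum_insert hnotin1]
    norm_num
  have hc1 : (∑ m ∈ Finset.Icc (1 + 1) n, ((-1 : ℝ) ^ (m - 1 + 1) / (Nat.factorial m : ℝ)))
      = 1 - phi1 n := by
    have h' : (∑ m ∈ Finset.Icc (1 + 1) n, ((-1 : ℝ) ^ (m - 1 + 1) / (Nat.factorial m : ℝ)))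
        = ∑ m ∈ Finset.Icc (1 + 1) n, -((-1 : ℝ) ^ (m - 1) / (Nat.factorial m : ℝ)) := by
      refine Finset.sum_congr rfl fun m hm => ?_
      rw [pow_succ]; ring
    rw [h', Finset.sum_neg_distrib, hphi]; ring
  have hphi2 : phi1 n = 1 - 2⁻¹
      + ∑ m ∈ Finset.Icc (2 + 1) n, (-1 : ℝ) ^ (m - 1) / (Nat.factorial m : ℝ) := by
    rw [hphi, hins2, Finset.sum_insert hnotin2]
    norm_num [Nat.factorial]
    ring
  have hc2 : (∑ m ∈ Finset.Icc (2 + 1) n, ((-1 : ℝ) ^ (m - 2 + 1) / (Nat.factorial m : ℝ)))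
      = phi1 n - 2⁻¹ := by
    have h' : (∑ m ∈ Finset.Icc (2 + 1) n, ((-1 : ℝ) ^ (m - 2 + 1) / (Nat.factorial m : ℝ)))
        = ∑ m ∈ Finset.Icc (2 + 1) n, ((-1 : ℝ) ^ (m - 1) / (Nat.factorial m : ℝ)) := by
      refine Finset.sum_congr rfl fun m hm => ?_
      simp only [Finset.mem_Icc] at hm
      rw [show m - 2 + 1 = m - 1 from by omega]
    rw [h']
    linarith [hphi2]
  -- sum exchange
  have hS := sum_exchange n (τt - τs) (fun j => iteratedDerivWithin j Γ (Set.Icc a b) τt)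
  have hsplit : Finset.Icc 1 (n - 1) = insert 1 (insert 2 (Finset.Icc 3 (n - 1))) := by
    ext m; simp only [Finset.mem_Icc, Finset.mem_insert]; omega
  have hni1 : (1 : ℕ) ∉ insert 2 (Finset.Icc 3 (n - 1)) := by simp
  have hni2 : (2 : ℕ) ∉ Finset.Icc 3 (n - 1) := by simp
  rw [iteratedDerivWithin_one, hS, hsplit, Finset.sum_insert hni1,
    Finset.sum_insert hni2, hc1, hc2]
  have hp1 : (τt - τs) ^ (1 - 1) = (1 : ℝ) := by norm_num
  have hp2 : (τt - τs) ^ (2 - 1) = τt - τs := by norm_num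
  have heq : (τt - τs)⁻¹ • (Γ τt - Γ τs) - phi1 n • derivWithin Γ (Set.Icc a b) τs -
      (((1 - phi1 n) * (τt - τs) ^ (1 - 1)) • iteratedDerivWithin 1 Γ (Set.Icc a b) τt +
        (((phi1 n - 2⁻¹) * (τt - τs) ^ (2 - 1)) • iteratedDerivWithin 2 Γ (Set.Icc a b) τt +
          ∑ j ∈ Finset.Icc 3 (n - 1),
            ((∑ m ∈ Finset.Icc (j + 1) n, ((-1 : ℝ) ^ (m - j + 1) / (Nat.factorial m : ℝ)))
              * (τt - τs) ^ (j - 1)) • iteratedDerivWithin j Γ (Set.Icc a b) τt)) =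
      (-(τt - τs)⁻¹) • r₀ - phi1 n • r₁ -
        ∑ j ∈ Finset.Icc 3 (n - 1),
          ((∑ m ∈ Finset.Icc (j + 1) n, ((-1 : ℝ) ^ (m - j + 1) / (Nat.factorial m : ℝ)))
            * (τt - τs) ^ (j - 1)) • iteratedDerivWithin j Γ (Set.Icc a b) τt := by
    rw [e0, e1, hp1, hp2]
    match_scalars <;> (try (field_simp; try ring)) <;> (try norm_num)
  rw [heq]
  -- final estimates
  have hne' : |τt - τs| ≠ 0 := ne_of_gt hpos
  have ht1 : ‖(-(τt - τs)⁻¹) • r₀‖ ≤ M3 / 2 * (τt - τs) ^ 2 := by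
    rw [norm_smul, Real.norm_eq_abs, abs_neg, abs_inv]
    calc |τt - τs|⁻¹ * ‖r₀‖ ≤ |τt - τs|⁻¹ * (M3 / 2 * |τt - τs| ^ 3) := by
          exact mul_le_mul_of_nonneg_left hr0' (inv_nonneg.mpr (abs_nonneg _))
      _ = M3 / 2 * (τt - τs) ^ 2 := by
          rw [show |τt - τs| ^ 3 = (τt - τs) ^ 2 * |τt - τs| from by
            rw [← sq_abs (τt - τs)]; ring]
          field_simp [hne']
  have ht2 : ‖phi1 n • r₁‖ ≤ |phi1 n| * M3 * (τt - τs) ^ 2 := by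
    rw [norm_smul, Real.norm_eq_abs]
    calc |phi1 n| * ‖r₁‖ ≤ |phi1 n| * (M3 * |τt - τs| ^ 2) :=
          mul_le_mul_of_nonneg_left hr1' (abs_nonneg _)
      _ = |phi1 n| * M3 * (τt - τs) ^ 2 := by rw [sq_abs]; ring
  have ht3 : ‖∑ j ∈ Finset.Icc 3 (n - 1),
      ((∑ m ∈ Finset.Icc (j + 1) n, ((-1 : ℝ) ^ (m - j + 1) / (Nat.factorial m : ℝ)))
        * (τt - τs) ^ (j - 1)) • iteratedDerivWithin j Γ (Set.Icc a b) τt‖ ≤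
      (∑ j ∈ Finset.Icc 3 (n - 1),
        |∑ m ∈ Finset.Icc (j + 1) n, ((-1 : ℝ) ^ (m - j + 1) / (Nat.factorial m : ℝ))| * B j)
        * (τt - τs) ^ 2 := by
    refine le_trans (norm_sum_le _ _) ?_
    rw [Finset.sum_mul]
    refine Finset.sum_le_sum fun j hj => ?_
    simp only [Finset.mem_Icc] at hj
    rw [norm_smul, Real.norm_eq_abs, abs_mul, abs_pow]
    have hGb : ‖iteratedDerivWithin j Γ (Set.Icc a b) τt‖ ≤ B j := hB j (by omega) τt hτt
    have hpow : |τt - τs| ^ (j - 1) ≤ |τt - τs| ^ 2 :=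
      pow_le_pow_of_le_one (abs_nonneg _) hle (by omega)
    calc |∑ m ∈ Finset.Icc (j + 1) n, ((-1 : ℝ) ^ (m - j + 1) / (Nat.factorial m : ℝ))|
          * |τt - τs| ^ (j - 1) * ‖iteratedDerivWithin j Γ (Set.Icc a b) τt‖ ≤
        |∑ m ∈ Finset.Icc (j + 1) n, ((-1 : ℝ) ^ (m - j + 1) / (Nat.factorial m : ℝ))|
          * |τt - τs| ^ 2 * B j := by
          have hnn := norm_nonneg (iteratedDerivWithin j Γ (Set.Icc a b) τt)
          gcongr
      _ = |∑ m ∈ Finset.Icc (j + 1) n, ((-1 : ℝ) ^ (m - j + 1) / (Nat.factorial m : ℝ))|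
          * B j * (τt - τs) ^ 2 := by rw [sq_abs]; ring
  calc ‖(-(τt - τs)⁻¹) • r₀ - phi1 n • r₁ -
        ∑ j ∈ Finset.Icc 3 (n - 1),
          ((∑ m ∈ Finset.Icc (j + 1) n, ((-1 : ℝ) ^ (m - j + 1) / (Nat.factorial m : ℝ)))
            * (τt - τs) ^ (j - 1)) • iteratedDerivWithin j Γ (Set.Icc a b) τt‖ ≤
      ‖(-(τt - τs)⁻¹) • r₀ - phi1 n • r₁‖ + ‖∑ j ∈ Finset.Icc 3 (n - 1),
          ((∑ m ∈ Finset.Icc (j + 1) n, ((-1 : ℝ) ^ (m - j + 1) / (Nat.factorial m : ℝ)))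
            * (τt - τs) ^ (j - 1)) • iteratedDerivWithin j Γ (Set.Icc a b) τt‖ :=
        norm_sub_le _ _
    _ ≤ (‖(-(τt - τs)⁻¹) • r₀‖ + ‖phi1 n • r₁‖) + ‖∑ j ∈ Finset.Icc 3 (n - 1),
          ((∑ m ∈ Finset.Icc (j + 1) n, ((-1 : ℝ) ^ (m - j + 1) / (Nat.factorial m : ℝ)))
            * (τt - τs) ^ (j - 1)) • iteratedDerivWithin j Γ (Set.Icc a b) τt‖ :=
        add_le_add_left (norm_sub_le _ _) _
    _ ≤ (M3 / 2 * (τt - τs) ^ 2 + |phi1 n| * M3 * (τt - τs) ^ 2) +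
        (∑ j ∈ Finset.Icc 3 (n - 1),
          |∑ m ∈ Finset.Icc (j + 1) n, ((-1 : ℝ) ^ (m - j + 1) / (Nat.factorial m : ℝ))| * B j)
          * (τt - τs) ^ 2 := by
        exact add_le_add (add_le_add ht1 ht2) ht3
    _ ≤ (M3 / 2 + |phi1 n| * M3 +
        (∑ j ∈ Finset.Icc 3 (n - 1),
          |∑ m ∈ Finset.Icc (j + 1) n, ((-1 : ℝ) ^ (m - j + 1) / (Nat.factorial m : ℝ))| * B j)
        + 1) * (τt - τs) ^ 2 := by nlinarith [sq_nonneg (τt - τs)]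
end
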